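/- arXiv:2504.03139 — 7 statements merged into one kernel-verified Lean document; each statement's English description precedes it below -/
import Mathlib

section
/- Let pᵢ (0 ≤ i ≤ s) and q_j (0 ≤ j ≤ t) be elements of ℂ[[x,y]]. Then dim_ℂ ℂ[[x,y]]/(∏ᵢ pᵢ, ∏_j q_j) = Σᵢ Σ_j dim_ℂ ℂ[[x,y]]/(pᵢ, q_j), as elements of ℕ∪{∞}. -/
/-!
Multiplication by `b` gives an exact sequence of `ℂ`-vector spaces
`0 → R/(a,c) → R/(ab,c) → R/(b,c) → 0`, `R = ℂ[[x,y]]`, as soon as `b` is a non-zero-divisor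
modulo `c`; this makes the dimension additive in each argument of the pair.
If `R/(b,c)` is infinite dimensional, both sides are `∞`. Otherwise `R/(b,c)` is Artinian, so
`(b,c)` contains powers `x^m` and `y^r`, and `c ∣ bz` gives `c ∣ x^m z` and `c ∣ y^r z`;
since `x^m` is a non-zero-divisor modulo `y^r`, this forces `c ∣ z`.
-/

open MvPowerSeries

/-- The formal power series ring `ℂ[[x,y]]`. -/
noncomputable abbrev CXY : Type := MvPowerSeries (Fin 2) ℂ

/-- The dimension of `ℂ[[x,y]] / I` as a `ℂ`-vector space, in `ℕ∞`. -/
noncomputable def dimCXY (I : Ideal CXY) : ℕ∞ :=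
  (Module.rank ℂ (CXY ⧸ I)).toENat

open Cardinal

section CommRing

variable {R : Type*} [CommRing R]

theorem Ideal.span_mul_pair_le_span_pair (a b c : R) :
    Ideal.span {a * b, c} ≤ Ideal.span {b, c} :=
  Ideal.span_le.mpr <| by
    rintro x (rfl | rfl)
    · exact Ideal.mul_mem_left _ a (Ideal.subset_span (Set.mem_insert _ _))
    · exact Ideal.subset_span (Set.mem_insert_of_mem _ rfl)

theorem dvd_mul_of_mem_span_pair {b c x z : R} (hx : x ∈ Ideal.span {b, c}) (hz : c ∣ b * z) :
    c ∣ x * z := by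
  obtain ⟨α, β, rfl⟩ := Ideal.mem_span_pair.mp hx
  rw [add_mul, mul_assoc, mul_assoc, mul_left_comm β]
  exact dvd_add (hz.mul_left α) (dvd_mul_right c _)

theorem dvd_of_dvd_mul_of_dvd_mul [NoZeroDivisors R] {x y c z : R} (hx : x ≠ 0)
    (hxy : ∀ q, x ∣ y * q → x ∣ q) (hxz : c ∣ x * z) (hyz : c ∣ y * z) : c ∣ z := by
  obtain ⟨u, hu⟩ := hxz
  obtain ⟨v, hv⟩ := hyz
  rcases eq_or_ne c 0 with rfl | hc
  · simp_all
  have hxv : x * v = y * u := mul_left_cancel₀ hc <| by linear_combination y * hu - x * hv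
  obtain ⟨w, rfl⟩ := hxy u ⟨v, hxv.symm⟩
  exact ⟨w, mul_left_cancel₀ hx <| by rw [hu, mul_left_comm]⟩

theorem dvd_of_dvd_mul_of_mem_span_pair [NoZeroDivisors R] {b c x y : R}
    (hx : x ∈ Ideal.span {b, c}) (hy : y ∈ Ideal.span {b, c}) (hx0 : x ≠ 0)
    (hxy : ∀ q, x ∣ y * q → x ∣ q) {z : R} (hz : c ∣ b * z) : c ∣ z :=
  dvd_of_dvd_mul_of_dvd_mul hx0 hxy (dvd_mul_of_mem_span_pair hx hz)
    (dvd_mul_of_mem_span_pair hy hz)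

variable {K : Type*} [Field K] [Algebra K R]

theorem rank_quotient_span_mul_pair {a b c : R} (hb : ∀ z, c ∣ b * z → c ∣ z) :
    Module.rank K (R ⧸ Ideal.span {a * b, c}) =
      Module.rank K (R ⧸ Ideal.span {b, c}) + Module.rank K (R ⧸ Ideal.span {a, c}) := by
  set I := Ideal.span {a * b, c}
  have hIB : I ≤ Ideal.span {b, c} := Ideal.span_mul_pair_le_span_pair a b c
  let π := (Ideal.Quotient.factorₐ K hIB).toLinearMap
  let μ : R →ₗ[K] R ⧸ I := (Ideal.Quotient.mkₐ K I).toLinearMap ∘ₗ LinearMap.mulRight K b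
  have hrange : LinearMap.range μ = LinearMap.ker π := by
    ext x
    obtain ⟨x, rfl⟩ := Ideal.Quotient.mk_surjective x
    simp only [LinearMap.mem_range, LinearMap.mem_ker, π, μ, AlgHom.toLinearMap_apply,
      Ideal.Quotient.factorₐ_apply_mk, LinearMap.comp_apply, LinearMap.mulRight_apply,
      Ideal.Quotient.mkₐ_eq_mk, Ideal.Quotient.eq_zero_iff_mem, Ideal.Quotient.eq]
    constructor
    · rintro ⟨y, hy⟩
      obtain ⟨u, v, huv⟩ := Ideal.mem_span_pair.mp hy
      exact Ideal.mem_span_pair.mpr ⟨y - u * a, -v, by linear_combination -huv⟩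
    · intro hx
      obtain ⟨u, v, huv⟩ := Ideal.mem_span_pair.mp hx
      exact ⟨u, Ideal.mem_span_pair.mpr ⟨0, -v, by linear_combination -huv⟩⟩
  have hker : LinearMap.ker μ = (Ideal.span {a, c}).restrictScalars K := by
    ext x
    simp only [LinearMap.mem_ker, Submodule.restrictScalars_mem, μ, LinearMap.comp_apply,
      LinearMap.mulRight_apply, AlgHom.toLinearMap_apply, Ideal.Quotient.mkₐ_eq_mk,
      Ideal.Quotient.eq_zero_iff_mem, I, Ideal.mem_span_pair]
    constructor
    · rintro ⟨u, v, huv⟩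
      obtain ⟨w, hw⟩ := hb (x - u * a) ⟨v, by linear_combination -huv⟩
      exact ⟨u, w, by linear_combination -hw⟩
    · rintro ⟨u, v, rfl⟩
      exact ⟨u, v * b, by ring⟩
  rw [LinearMap.rank_eq_of_surjective (f := π) (Ideal.Quotient.factor_surjective hIB), ← hrange,
    ← μ.quotKerEquivRange.rank_eq, hker,
    (Submodule.Quotient.restrictScalarsEquiv K (Ideal.span {a, c})).rank_eq]

theorem IsLocalRing.exists_pow_mem_of_rank_quotient_lt_aleph0 [IsLocalRing R]
    {I : Ideal R} (hI : Module.rank K (R ⧸ I) < ℵ₀) {x : R}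
    (hx : x ∈ IsLocalRing.maximalIdeal R) : ∃ n : ℕ, x ^ n ∈ I := by
  have : Module.Finite K (R ⧸ I) := Module.rank_lt_aleph0_iff.mp hI
  have : IsArtinianRing (R ⧸ I) := IsArtinianRing.of_finite K (R ⧸ I)
  obtain ⟨n, hn⟩ := IsLocalRing.exists_maximalIdeal_pow_le_of_isArtinianRing_quotient I
  exact ⟨n, hn (Ideal.pow_mem_pow hx n)⟩

end CommRing

namespace MvPowerSeries

theorem X_pow_dvd_of_dvd_X_pow_mul {σ R : Type*} [Semiring R] {s s' : σ} (h : s ≠ s')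
    {m r : ℕ} {φ : MvPowerSeries σ R} (hφ : X s ^ m ∣ X s' ^ r * φ) : X s ^ m ∣ φ := by
  classical
  rw [X_pow_dvd_iff] at hφ ⊢
  intro n hn
  have := hφ (n + Finsupp.single s' r) (by simpa [Finsupp.single_apply, h.symm] using hn)
  rwa [X_pow_eq, coeff_monomial_mul, if_pos le_add_self, one_mul, add_tsub_cancel_right] at this

theorem X_ne_zero {σ R : Type*} [Semiring R] [Nontrivial R] (s : σ) :
    (X s : MvPowerSeries σ R) ≠ 0 := fun h => by
  simpa using congrArg (coeff (Finsupp.single s 1)) h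

theorem X_mem_maximalIdeal {σ R : Type*} [CommRing R] [IsLocalRing R] (s : σ) :
    (X s : MvPowerSeries σ R) ∈ IsLocalRing.maximalIdeal (MvPowerSeries σ R) := by
  simp [isUnit_iff_constantCoeff]

variable {σ K : Type*} [Field K]

theorem dvd_of_dvd_mul_of_rank_quotient_lt_aleph0 [Nontrivial σ] {b c : MvPowerSeries σ K}
    (h : Module.rank K (MvPowerSeries σ K ⧸ Ideal.span {b, c}) < ℵ₀) {z : MvPowerSeries σ K}
    (hz : c ∣ b * z) : c ∣ z := by
  obtain ⟨s, s', hss'⟩ := exists_pair_ne σ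
  obtain ⟨m, hm⟩ := IsLocalRing.exists_pow_mem_of_rank_quotient_lt_aleph0 h (X_mem_maximalIdeal s)
  obtain ⟨r, hr⟩ := IsLocalRing.exists_pow_mem_of_rank_quotient_lt_aleph0 h (X_mem_maximalIdeal s')
  exact dvd_of_dvd_mul_of_mem_span_pair hm hr (pow_ne_zero m (X_ne_zero s))
    (fun _ => X_pow_dvd_of_dvd_X_pow_mul hss') hz

theorem toENat_rank_quotient_span_mul_pair [Nontrivial σ] (a b c : MvPowerSeries σ K) :
    (Module.rank K (MvPowerSeries σ K ⧸ Ideal.span {a * b, c})).toENat =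
      (Module.rank K (MvPowerSeries σ K ⧸ Ideal.span {a, c})).toENat +
        (Module.rank K (MvPowerSeries σ K ⧸ Ideal.span {b, c})).toENat := by
  by_cases h : Module.rank K (MvPowerSeries σ K ⧸ Ideal.span {b, c}) < ℵ₀
  · rw [rank_quotient_span_mul_pair (fun _ => dvd_of_dvd_mul_of_rank_quotient_lt_aleph0 h),
      map_add, add_comm]
  · have hIB := Ideal.span_mul_pair_le_span_pair a b c
    have hle := LinearMap.rank_le_of_surjective (Ideal.Quotient.factorₐ K hIB).toLinearMap
      (Ideal.Quotient.factor_surjective hIB)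
    rw [not_lt] at h
    simp [toENat_eq_top.mpr h, toENat_eq_top.mpr (h.trans hle)]

end MvPowerSeries

theorem dimCXY_span_prod_pair {ι : Type*} (s : Finset ι) (p : ι → CXY) (c : CXY) :
    dimCXY (Ideal.span {∏ i ∈ s, p i, c}) = ∑ i ∈ s, dimCXY (Ideal.span {p i, c}) := by
  classical
  induction s using Finset.induction_on with
  | empty =>
    have : Ideal.span {1, c} = ⊤ :=
      Ideal.eq_top_of_isUnit_mem _ (Ideal.subset_span (Set.mem_insert _ _)) isUnit_one
    rw [Finset.prod_empty, Finset.sum_empty, dimCXY, this]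
    simp
  | insert i s hi ih =>
    rw [Finset.prod_insert hi, Finset.sum_insert hi, ← ih]
    exact toENat_rank_quotient_span_mul_pair _ _ _

/-- For `pᵢ (0 ≤ i ≤ s)` and `q_j (0 ≤ j ≤ t)` in `ℂ[[x,y]]`:
`dim_ℂ ℂ[[x,y]]/(∏ᵢ pᵢ, ∏_j q_j) = Σᵢ Σ_j dim_ℂ ℂ[[x,y]]/(pᵢ, q_j)` in `ℕ∞`. -/
theorem stmt2 (s t : ℕ) (p : Fin (s + 1) → CXY) (q : Fin (t + 1) → CXY) :
    dimCXY (Ideal.span {∏ i, p i, ∏ j, q j}) =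
      ∑ i, ∑ j, dimCXY (Ideal.span {p i, q j}) := by
  rw [dimCXY_span_prod_pair]
  refine Finset.sum_congr rfl fun i _ => ?_
  rw [Set.pair_comm, dimCXY_span_prod_pair]
  exact Finset.sum_congr rfl fun j _ => by rw [Set.pair_comm]
end

section
/- Let R = ℂ[[u,v,x,y]]/(uv − g₀g₁⋯g_m) where g₀,…,g_m ∈ ℂ[[x,y]] are nonzero and pairwise without common irreducible factors with u. Then the R-module quotient (u, G)/(u, g₀G, G g_m, G v), where G = g₁g₂⋯g_{m−1}, is isomorphic as an R-module to ℂ[[u,v,x,y]]/(u, v, g₀, g_m). In particular its ℂ-dimension equals dim_ℂ ℂ[[x,y]]/(g₀,g_m). -/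
set_option maxHeartbeats 1000000
set_option synthInstance.maxHeartbeats 400000
open MvPowerSeries

/-- The formal power series ring `ℂ[[x,y]]`. -/
noncomputable abbrev Bxy : Type := MvPowerSeries (Fin 2) ℂ

/-- The formal power series ring `ℂ[[u,v,x,y]]`, realised as `(ℂ[[x,y]])[[u,v]]`,
with `u = X 0` and `v = X 1`. -/
noncomputable abbrev Auvxy : Type := MvPowerSeries (Fin 2) Bxy

/-- The inclusion `ℂ[[x,y]] → ℂ[[u,v,x,y]]`. -/
noncomputable def cb : Bxy →+* Auvxy := MvPowerSeries.C

/-!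
Multiplication by `G` maps `R` onto `(u, G)/(u, g₀G, Gg_m, Gv)`, since `u` already lies in the
smaller ideal, so the quotient is `R` modulo the colon ideal `((u, g₀G, Gg_m, Gv) : G)`. Lifted to
`ℂ[[u,v,x,y]]`, the relation `uv - g₀⋯g_m` lies in `(u, g₀G)` because `g₀G ∣ g₀⋯g_m` (also for
`m = 0`, where `G = 1`); so `xG ∈ (u) + G·(v, g₀, g_m)` means `u ∣ G(x - y)` for some
`y ∈ (v, g₀, g_m)`, and as `u` is prime and coprime to `G` this forces `x ∈ (u, v, g₀, g_m)`.
Finally `ℂ[[u,v,x,y]]/(u, v, g₀, g_m)` is `ℂ[[x,y]]/(g₀, g_m)` via the constant coefficient in `u, v`.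
-/

theorem MvPowerSeries.prime_X_zero {R : Type*} [CommRing R] [NoZeroDivisors R] [Nontrivial R]
    (n : ℕ) : Prime (X 0 : MvPowerSeries (Fin (n + 1)) R) := by
  have : IsDomain (MvPowerSeries (Fin n) R) := NoZeroDivisors.to_isDomain _
  rw [← MulEquiv.prime_iff (finSuccEquiv R n), finSuccEquiv_X_zero]
  exact PowerSeries.X_prime

theorem MvPowerSeries.mem_span_X_zero_X_one {R : Type*} [CommRing R]
    {f : MvPowerSeries (Fin 2) R} (hf : constantCoeff f = 0) :
    f ∈ Ideal.span {X 0, X 1} := by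
  let f₀ : MvPowerSeries (Fin 2) R := fun d => if d 0 = 0 then coeff d f else 0
  have hf₀ (d : Fin 2 →₀ ℕ) : coeff d f₀ = if d 0 = 0 then coeff d f else 0 := rfl
  obtain ⟨a, ha⟩ : X 0 ∣ f - f₀ := X_dvd_iff.mpr fun d hd => by simp [hf₀, hd]
  obtain ⟨b, hb⟩ : X 1 ∣ f₀ := X_dvd_iff.mpr fun d hd => by
    by_cases hd₀ : d 0 = 0
    · have : d = 0 := by ext i; fin_cases i <;> assumption
      simp [hf₀, this, hf]
    · simp [hf₀, hd₀]
  exact Ideal.mem_span_pair.mpr ⟨a, b, by linear_combination -ha - hb⟩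

noncomputable def MvPowerSeries.quotientSpanXSupMapCEquiv (k : Type*) {S : Type*} [CommRing k]
    [CommRing S] [Algebra k S] (Q : Ideal S) :
    (MvPowerSeries (Fin 2) S ⧸ (Ideal.span {X 0, X 1} ⊔ Q.map C)) ≃ₐ[k] S ⧸ Q :=
  let ψ : MvPowerSeries (Fin 2) S →ₐ[k] S ⧸ Q :=
    { (Ideal.Quotient.mk Q).comp constantCoeff with
      commutes' := fun c => by simp [MvPowerSeries.algebraMap_apply] }
  have hsurj : Function.Surjective ψ := fun z => by
    obtain ⟨b, rfl⟩ := Ideal.Quotient.mk_surjective z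
    exact ⟨C b, by simp [ψ]⟩
  have hker : RingHom.ker ψ = Ideal.span {X 0, X 1} ⊔ Q.map C := by
    apply le_antisymm
    · intro f hf
      have hc : constantCoeff f ∈ Q := Ideal.Quotient.eq_zero_iff_mem.mp hf
      rw [← sub_add_cancel f (C (constantCoeff f))]
      exact add_mem (Ideal.mem_sup_left (mem_span_X_zero_X_one (by simp)))
        (Ideal.mem_sup_right (Ideal.mem_map_of_mem C hc))
    · refine sup_le ?_ ?_
      · rw [Ideal.span_le]
        rintro _ (rfl | rfl) <;> simp [ψ]
      · rw [Ideal.map_le_iff_le_comap]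
        intro a ha
        simpa [ψ, Ideal.Quotient.eq_zero_iff_mem] using ha
  (Ideal.quotientEquivAlgOfEq k hker.symm).trans (Ideal.quotientKerAlgEquivOfSurjective hsurj)

noncomputable def MvPowerSeries.quotientQuotientSpanXCEquiv (k : Type*) {S : Type*} [CommRing k]
    [CommRing S] [Algebra k S] {J : Ideal (MvPowerSeries (Fin 2) S)} {a b : S}
    (hJ : J ≤ Ideal.span {X 0, X 1, C a, C b}) :
    let mk := Ideal.Quotient.mk J
    ((MvPowerSeries (Fin 2) S ⧸ J) ⧸ Ideal.span {mk (X 0), mk (X 1), mk (C a), mk (C b)}) ≃ₐ[k]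
      S ⧸ Ideal.span {a, b} :=
  have hK : Ideal.span {X 0, X 1, C a, C b} =
      Ideal.span {X 0, X 1} ⊔ (Ideal.span {a, b}).map (C (σ := Fin 2)) := by
    simp only [Ideal.map_span, Set.image_insert_eq, Set.image_singleton, ← Ideal.span_union,
      Set.insert_union, Set.singleton_union]
  have hmk : Ideal.span {Ideal.Quotient.mk J (X 0), Ideal.Quotient.mk J (X 1),
      Ideal.Quotient.mk J (C a), Ideal.Quotient.mk J (C b)} =
      (Ideal.span {X 0, X 1, C a, C b}).map (Ideal.Quotient.mkₐ k J) := by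
    simp [Ideal.map_span, Set.image_insert_eq]
  (Ideal.quotientEquivAlgOfEq k hmk).trans <| (DoubleQuot.quotQuotEquivQuotOfLEₐ k hJ).trans <|
    (Ideal.quotientEquivAlgOfEq k hK).trans (quotientSpanXSupMapCEquiv k _)

section
variable {R : Type*} [CommRing R]

noncomputable def Ideal.quotSpanPairEquivQuotColon {s t : R} {I : Ideal R} (hs : s ∈ I) :
    (Ideal.span {s, t} ⧸ Submodule.comap (Ideal.span {s, t}).subtype I) ≃ₗ[R]
      R ⧸ I.colon {t} :=
  let N := Submodule.comap (Ideal.span {s, t}).subtype I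
  let f := N.mkQ ∘ₗ LinearMap.toSpanSingleton R _ ⟨t, Ideal.subset_span (by simp)⟩
  have hsurj : Function.Surjective f := by
    rintro ⟨⟨x, hx⟩⟩
    obtain ⟨a, b, rfl⟩ := Ideal.mem_span_pair.mp hx
    refine ⟨b, (Submodule.Quotient.eq N).mpr ?_⟩
    show b * t - (a * s + b * t) ∈ I
    simpa using I.mul_mem_left (-a) hs
  have hker : LinearMap.ker f = I.colon {t} := by
    ext r
    simp [f, N, Submodule.Quotient.mk_eq_zero]
  (f.quotKerEquivOfSurjective hsurj).symm.trans (Submodule.quotEquivOfEq _ _ hker)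

theorem Ideal.colon_singleton_map_mk {J I K : Ideal R} (hI : J ≤ I) (hK : J ≤ K) {G : R}
    (hG : ∀ x, x * G ∈ I ↔ x ∈ K) :
    (I.map (Ideal.Quotient.mk J)).colon {Ideal.Quotient.mk J G} = K.map (Ideal.Quotient.mk J) := by
  ext r
  obtain ⟨x, rfl⟩ := Ideal.Quotient.mk_surjective r
  rw [Submodule.mem_colon_singleton, smul_eq_mul, ← map_mul, Ideal.mem_quotient_iff_mem_sup,
    Ideal.mem_quotient_iff_mem_sup, sup_eq_left.mpr hI, sup_eq_left.mpr hK, hG]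

theorem Prime.mul_mem_span_singleton_sup_iff {u G : R} (hu : Prime u) (hG : ¬ u ∣ G)
    (L : Ideal R) {x : R} :
    x * G ∈ Ideal.span {u} ⊔ Ideal.span {G} * L ↔ x ∈ Ideal.span {u} ⊔ L := by
  simp only [Ideal.mem_span_singleton_sup, Ideal.mem_span_singleton_mul]
  constructor
  · rintro ⟨a, _, ⟨y, hy, rfl⟩, hxy⟩
    have : u ∣ G * (x - y) := ⟨a, by linear_combination -hxy⟩
    obtain ⟨w, hw⟩ := (hu.dvd_or_dvd this).resolve_left hG
    exact ⟨w, y, hy, by linear_combination -hw⟩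
  · rintro ⟨a, y, hy, rfl⟩
    exact ⟨a * G, _, ⟨y, hy, rfl⟩, by ring⟩

theorem Prime.quotient_span_colon_singleton_eq {u v a b G P : R} (hu : Prime u) (hG : ¬ u ∣ G)
    (hP : a * G ∣ P) :
    let mk := Ideal.Quotient.mk (Ideal.span {u * v - P})
    (Ideal.span {mk u, mk (a * G), mk (G * b), mk (G * v)}).colon {mk G} =
      Ideal.span {mk u, mk v, mk a, mk b} := by
  intro mk
  set L := Ideal.span {v, a, b}
  obtain ⟨c, rfl⟩ := hP
  have hJI : Ideal.span {u * v - a * G * c} ≤ Ideal.span {u} ⊔ Ideal.span {G} * L := by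
    rw [Ideal.span_le, Set.singleton_subset_iff]
    refine sub_mem (Ideal.mem_sup_left (Ideal.mul_mem_right _ _ (Ideal.mem_span_singleton_self _)))
      (Ideal.mem_sup_right ?_)
    rw [mul_comm a, mul_assoc]
    exact Ideal.mul_mem_mul (Ideal.mem_span_singleton_self _)
      (Ideal.mul_mem_right _ _ (Ideal.subset_span (by simp)))
  have hJK : Ideal.span {u * v - a * G * c} ≤ Ideal.span {u} ⊔ L :=
    hJI.trans (sup_le_sup_left Ideal.mul_le_right _)
  have hI : Ideal.span {mk u, mk (a * G), mk (G * b), mk (G * v)} =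
      (Ideal.span {u} ⊔ Ideal.span {G} * L).map mk := by
    simp only [L, Ideal.map_span, Set.image_singleton, Set.image_insert_eq, Ideal.span_mul_span',
      Set.singleton_mul, ← Ideal.span_insert]
    congr 1
    ext
    simp only [Set.mem_insert_iff, Set.mem_singleton_iff, map_mul, mul_comm (mk G)]
    tauto
  have hK : Ideal.span {mk u, mk v, mk a, mk b} = (Ideal.span {u} ⊔ L).map mk := by
    simp only [L, Ideal.map_span, Set.image_singleton, Set.image_insert_eq, ← Ideal.span_insert]
  rw [hI, hK]
  exact Ideal.colon_singleton_map_mk hJI hJK fun x => hu.mul_mem_span_singleton_sup_iff hG L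

end

theorem Fin.mul_prod_Ioo_dvd_prod {M : Type*} [CommMonoid M] {m : ℕ} (g : Fin (m + 1) → M) :
    g 0 * ∏ i ∈ Finset.Ioo 0 (Fin.last m), g i ∣ ∏ i, g i := by
  rw [← Finset.prod_insert (s := Finset.Ioo 0 (Fin.last m)) (by simp)]
  exact Finset.prod_dvd_prod_of_subset _ _ _ (Finset.subset_univ _)

theorem stmt3_general (m : ℕ) (g : Fin (m + 1) → Bxy)
    (hcop : ∀ i, ∀ d : Auvxy, ¬ IsUnit d → d ∣ (MvPowerSeries.X 0 : Auvxy) → ¬ d ∣ cb (g i)) :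
    let J : Ideal Auvxy :=
      Ideal.span {MvPowerSeries.X 0 * MvPowerSeries.X 1 - cb (∏ i, g i)}
    let R := Auvxy ⧸ J
    let mk : Auvxy →+* R := Ideal.Quotient.mk J
    let G : Bxy := ∏ i ∈ Finset.Ioo (0 : Fin (m + 1)) (Fin.last m), g i
    let I₁ : Ideal R := Ideal.span {mk (MvPowerSeries.X 0), mk (cb G)}
    let I₂ : Ideal R := Ideal.span {mk (MvPowerSeries.X 0), mk (cb (g 0 * G)),
      mk (cb (G * g (Fin.last m))), mk (cb G * MvPowerSeries.X 1)}
    Nonempty ((I₁ ⧸ Submodule.comap I₁.subtype I₂) ≃ₗ[R]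
        (R ⧸ Ideal.span {mk (MvPowerSeries.X 0), mk (MvPowerSeries.X 1),
          mk (cb (g 0)), mk (cb (g (Fin.last m)))})) ∧
      (Module.rank ℂ (I₁ ⧸ Submodule.comap I₁.subtype I₂)).toENat =
        (Module.rank ℂ (Bxy ⧸ Ideal.span {g 0, g (Fin.last m)})).toENat := by
  intro J R mk G I₁ I₂
  have hu : Prime (X 0 : Auvxy) := prime_X_zero 1
  have hG : ¬ (X 0 : Auvxy) ∣ cb G := by
    rw [map_prod, hu.dvd_finsetProd_iff]
    rintro ⟨i, -, hi⟩
    exact hcop i _ hu.not_isUnit dvd_rfl hi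
  have hP : cb (g 0) * cb G ∣ cb (∏ i, g i) := by
    rw [← map_mul]
    exact map_dvd cb (Fin.mul_prod_Ioo_dvd_prod g)
  have hcolon := hu.quotient_span_colon_singleton_eq (v := X 1) (b := cb (g (Fin.last m))) hG hP
  rw [← map_mul, ← map_mul] at hcolon
  let e := (Ideal.quotSpanPairEquivQuotColon (s := mk (X 0)) (t := mk (cb G)) (I := I₂)
    (Ideal.subset_span (by simp))).trans (Submodule.quotEquivOfEq _ _ hcolon)
  refine ⟨⟨e⟩, ?_⟩
  have hJ : J ≤ Ideal.span {X 0, X 1, cb (g 0), cb (g (Fin.last m))} := by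
    rw [Ideal.span_le, Set.singleton_subset_iff]
    obtain ⟨c, hc⟩ := dvd_trans (dvd_mul_right _ _) hP
    rw [hc]
    exact sub_mem (Ideal.mul_mem_right _ _ (Ideal.subset_span (by simp)))
      (Ideal.mul_mem_right _ _ (Ideal.subset_span (by simp)))
  rw [(e.restrictScalars ℂ).rank_eq]
  exact congrArg _ (quotientQuotientSpanXCEquiv ℂ hJ).toLinearEquiv.rank_eq

/-- For `R = ℂ[[u,v,x,y]]/(uv − g₀g₁⋯g_m)`, with `g₀,…,g_m ∈ ℂ[[x,y]]` nonzero and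
without common non-unit factors with `u`, the `R`-module quotient of ideals
`(u, G)/(u, g₀G, G g_m, G v)` with `G = g₁⋯g_{m−1}` is isomorphic as an `R`-module to
`ℂ[[u,v,x,y]]/(u, v, g₀, g_m)`; in particular its `ℂ`-dimension equals
`dim_ℂ ℂ[[x,y]]/(g₀, g_m)`. -/
theorem stmt3 (m : ℕ) (g : Fin (m + 1) → Bxy)
    (hg : ∀ i, g i ≠ 0)
    (hcop : ∀ i, ∀ d : Auvxy, ¬ IsUnit d → d ∣ (MvPowerSeries.X 0 : Auvxy) → ¬ d ∣ cb (g i)) :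
    let J : Ideal Auvxy :=
      Ideal.span {MvPowerSeries.X 0 * MvPowerSeries.X 1 - cb (∏ i, g i)}
    let R := Auvxy ⧸ J
    let mk : Auvxy →+* R := Ideal.Quotient.mk J
    let G : Bxy := ∏ i ∈ Finset.Ioo (0 : Fin (m + 1)) (Fin.last m), g i
    let I₁ : Ideal R := Ideal.span {mk (MvPowerSeries.X 0), mk (cb G)}
    let I₂ : Ideal R := Ideal.span {mk (MvPowerSeries.X 0), mk (cb (g 0 * G)),
      mk (cb (G * g (Fin.last m))), mk (cb G * MvPowerSeries.X 1)}
    Nonempty ((I₁ ⧸ Submodule.comap I₁.subtype I₂) ≃ₗ[R]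
        (R ⧸ Ideal.span {mk (MvPowerSeries.X 0), mk (MvPowerSeries.X 1),
          mk (cb (g 0)), mk (cb (g (Fin.last m)))})) ∧
      (Module.rank ℂ (I₁ ⧸ Submodule.comap I₁.subtype I₂)).toENat =
        (Module.rank ℂ (Bxy ⧸ Ideal.span {g 0, g (Fin.last m)})).toENat :=
  stmt3_general m g hcop
end

section
/- With the tridiagonal matrices A_{ij}² of the previous context (diagonal ε_i,…,ε_j, off-diagonals 1): if j − i is odd, then det A_{ij}² = (−1)^{(j−i+1)/2} + ε, where ε lies in the intersection of the ideals (ε_i, ε_{i+2}, …, ε_{j−1}) and (ε_{i+1}, ε_{i+3}, …, ε_j) of the polynomial ring ℂ[ε_i,…,ε_j]. -/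
open MvPolynomial

/-- The tridiagonal matrix of size `n`, with diagonal entries `ε 0, …, ε (n-1)` and all
sub- and super-diagonal entries equal to `1`. -/
def tridiag {R : Type*} [CommRing R] (ε : ℕ → R) (n : ℕ) : Matrix (Fin n) (Fin n) R :=
  fun i j =>
    if (i : ℕ) = (j : ℕ) then ε i
    else if (i : ℕ) + 1 = (j : ℕ) ∨ (j : ℕ) + 1 = (i : ℕ) then 1
    else 0

section MyCont
variable {R : Type*} [CommRing R]

def myCont : ℕ → (ℕ → R) → R
  | 0, _ => 1
  | 1, ε => ε 0
  | (n+2), ε => ε 0 * myCont (n+1) (fun k => ε (k+1)) - myCont n (fun k => ε (k+2))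

lemma det_tridiag_eq : ∀ (n : ℕ) (ε : ℕ → R), (tridiag ε n).det = myCont n ε := by
  intro n
  induction n using Nat.strong_induction_on with
  | _ n ih =>
    match n with
    | 0 => intro ε; simp [myCont, Matrix.det_fin_zero]
    | 1 => intro ε; simp [myCont, Matrix.det_fin_one, tridiag]
    | (n+2) =>
      intro ε
      rw [show (n+2) = (n+1).succ from rfl, Matrix.det_succ_column_zero]
      rw [Fin.sum_univ_succ, Fin.sum_univ_succ]
      have h0 : (tridiag ε (n+2)).submatrix (Fin.succAbove 0) Fin.succ
          = tridiag (fun k => ε (k+1)) (n+1) := by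
        ext i j
        simp [tridiag, Matrix.submatrix, Fin.succAbove, Fin.succ]
      have h00 : tridiag ε (n+2) 0 0 = ε 0 := by simp [tridiag]
      have h10 : tridiag ε (n+2) 1 0 = 1 := by simp [tridiag]
      have hrest : ∀ i : Fin n, tridiag ε (n+2) i.succ.succ 0 = 0 := by
        intro i
        have h1 : ((i.succ.succ : Fin (n+2)) : ℕ) = (i : ℕ) + 2 := by simp [Fin.succ]
        simp [tridiag, h1]
      have hN : ((tridiag ε (n+2)).submatrix (Fin.succAbove 1) Fin.succ).det
          = myCont n (fun k => ε (k+2)) := by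
        set N := (tridiag ε (n+2)).submatrix (Fin.succAbove 1) Fin.succ with hNdef
        rw [Matrix.det_succ_row_zero N]
        rw [Fin.sum_univ_succ]
        have hN00 : N 0 0 = 1 := by
          simp [hNdef, tridiag, Matrix.submatrix, Fin.succAbove, Fin.succ]
        have hN0j : ∀ j : Fin n, N 0 j.succ = 0 := by
          intro j
          have : ((j.succ.succ : Fin (n+2)) : ℕ) = (j : ℕ) + 2 := by simp [Fin.succ]
          simp [hNdef, tridiag, Matrix.submatrix, Fin.succAbove, this]
        have hNsub : N.submatrix Fin.succ (Fin.succAbove 0) = tridiag (fun k => ε (k+2)) n := by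
          ext i j
          have h1 : (((1:Fin (n+2)).succAbove i.succ : Fin (n+2)) : ℕ) = (i : ℕ) + 2 := by
            simp [Fin.succAbove, Fin.succ, Fin.lt_iff_val_lt_val]
          have h2 : ((((0:Fin (n+1)).succAbove j).succ : Fin (n+2)) : ℕ) = (j : ℕ) + 2 := by
            simp [Fin.succAbove, Fin.succ]
          simp [hNdef, tridiag, Matrix.submatrix, h1, h2]
        rw [Finset.sum_eq_zero (fun j _ => by rw [hN0j j]; ring)]
        simp only [hN00, hNsub, Fin.val_zero, pow_zero, one_mul, mul_one, add_zero]
        rw [ih n (by omega)]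
      rw [Finset.sum_eq_zero (fun i _ => by rw [hrest i]; ring)]
      simp only [Fin.succ_zero_eq_one, h0, h00, h10, hN, Fin.val_zero, Fin.val_one, pow_zero, pow_one, one_mul,
        mul_one, add_zero, neg_one_mul, neg_neg]
      rw [ih (n+1) (by omega)]
      show ε 0 * myCont (n+1) (fun k => ε (k+1)) + -(myCont n fun k => ε (k+2)) = _
      rw [myCont]
      ring

lemma myCont_odd_zero : ∀ (m : ℕ) (η : ℕ → R),
    (∀ k, k < 2*m+1 → Even k → η k = 0) → myCont (2*m+1) η = 0 := by
  intro m
  induction m with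
  | zero => intro η h; exact h 0 (by omega) (Even.zero)
  | succ m ih =>
    intro η h
    show myCont (2*m+1+2) η = 0
    rw [myCont]
    rw [h 0 (by omega) Even.zero, ih (fun k => η (k+2))
      (fun k hk he => h (k+2) (by omega) (by rcases he with ⟨t,ht⟩; exact ⟨t+1, by omega⟩))]
    ring

lemma myCont_even_vanish : ∀ (m : ℕ) (η : ℕ → R),
    (∀ k, k < 2*m → Even k → η k = 0) → myCont (2*m) η = (-1)^m := by
  intro m
  induction m with
  | zero => intro η h; simp [myCont]
  | succ m ih =>
    intro η h
    show myCont (2*m+2) η = _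
    rw [myCont]
    rw [h 0 (by omega) Even.zero, ih (fun k => η (k+2))
      (fun k hk he => h (k+2) (by omega) (by rcases he with ⟨t,ht⟩; exact ⟨t+1, by omega⟩))]
    ring

lemma myCont_odd_vanish : ∀ (m : ℕ) (η : ℕ → R),
    (∀ k, k < 2*m → Odd k → η k = 0) → myCont (2*m) η = (-1)^m := by
  intro m
  induction m with
  | zero => intro η h; simp [myCont]
  | succ m ih =>
    intro η h
    show myCont (2*m+2) η = _
    rw [myCont]
    rw [myCont_odd_zero m (fun k => η (k+1))
      (fun k hk he => h (k+1) (by omega) he.add_one),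
      ih (fun k => η (k+2)) (fun k hk ho => h (k+2) (by omega) (by rcases ho with ⟨t,ht⟩; exact ⟨t+1, by omega⟩))]
    ring

lemma tridiag_map {S : Type*} [CommRing S] (f : R →+* S) (ε : ℕ → R) (n : ℕ) :
    (tridiag ε n).map f = tridiag (fun k => f (ε k)) n := by
  ext i j
  simp only [tridiag, Matrix.map_apply]
  split_ifs <;> simp

end MyCont

lemma sub_aeval_mem (I : Ideal (MvPolynomial ℕ ℂ)) (g : ℕ → MvPolynomial ℕ ℂ)
    (hg : ∀ k, X k - g k ∈ I) (p : MvPolynomial ℕ ℂ) : p - aeval g p ∈ I := by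
  induction p using MvPolynomial.induction_on with
  | C a => simp
  | add p q hp hq =>
    have : p + q - aeval g (p + q) = (p - aeval g p) + (q - aeval g q) := by
      rw [map_add]; ring
    rw [this]; exact I.add_mem hp hq
  | mul_X p k hp =>
    have : p * X k - aeval g (p * X k)
        = (p - aeval g p) * X k + aeval g p * (X k - g k) := by
      rw [map_mul, aeval_X]; ring
    rw [this]
    exact I.add_mem (I.mul_mem_right _ hp) (I.mul_mem_left _ (hg k))

lemma det_sub_mem (P : ℕ → Prop) [DecidablePred P] (n : ℕ)
    (hP : ∀ ε : ℕ → MvPolynomial ℕ ℂ, (∀ k, P k → ε k = 0) →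
      myCont (2*(n+1)) ε = (-1)^(n+1)) :
    (tridiag (fun k => (X k : MvPolynomial ℕ ℂ)) (2 * (n + 1))).det - (-1)^(n+1) ∈
      Ideal.span ((fun k : ℕ => (X k : MvPolynomial ℕ ℂ)) '' {k | P k}) := by
  set I := Ideal.span ((fun k : ℕ => (X k : MvPolynomial ℕ ℂ)) '' {k | P k}) with hI
  set g : ℕ → MvPolynomial ℕ ℂ := fun k => if P k then 0 else X k with hg
  have hgen : ∀ k, X k - g k ∈ I := by
    intro k
    by_cases h : P k
    · simp only [hg, if_pos h, sub_zero]
      exact Ideal.subset_span ⟨k, h, rfl⟩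
    · simp [hg, if_neg h]
  set p : MvPolynomial ℕ ℂ :=
    (tridiag (fun k => (X k : MvPolynomial ℕ ℂ)) (2 * (n + 1))).det with hp
  have haev : aeval g p = (-1)^(n+1) := by
    have h1 : aeval g p = ((tridiag (fun k => (X k : MvPolynomial ℕ ℂ)) (2*(n+1))).map
        (aeval g : MvPolynomial ℕ ℂ →ₐ[ℂ] MvPolynomial ℕ ℂ).toRingHom).det :=
      RingHom.map_det _ _
    rw [h1, tridiag_map, det_tridiag_eq]
    have : (fun k => (aeval g : MvPolynomial ℕ ℂ →ₐ[ℂ] MvPolynomial ℕ ℂ).toRingHom (X k)) = g := by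
      funext k; simp
    rw [this]
    exact hP g (fun k hk => by simp [hg, if_pos hk])
  have := sub_aeval_mem I g hgen (p - (-1)^(n+1))
  rwa [map_sub, haev, map_pow, map_neg, map_one, sub_self, sub_zero] at this

/-- When `j − i` is odd, i.e. the size `m = j − i + 1` is even (here `m = 2(n+1)`), the
determinant of the tridiagonal matrix `A_{ij}²` over the polynomial ring
`ℂ[ε_i,…,ε_j]` equals `(−1)^{(j−i+1)/2} = (−1)^{m/2}` plus an element of the
intersection of the ideals `(ε_i, ε_{i+2}, …, ε_{j−1})` and `(ε_{i+1}, ε_{i+3}, …, ε_j)`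
(in zero-based indexing: the even-indexed and the odd-indexed variables). -/
theorem stmt6 (n : ℕ) :
    ∃ ε ∈ (Ideal.span ((fun k : ℕ => (X k : MvPolynomial ℕ ℂ)) ''
            {k | k < 2 * (n + 1) ∧ Even k})) ⊓
          (Ideal.span ((fun k : ℕ => (X k : MvPolynomial ℕ ℂ)) ''
            {k | k < 2 * (n + 1) ∧ Odd k})),
      (tridiag (fun k => (X k : MvPolynomial ℕ ℂ)) (2 * (n + 1))).det =
        (-1 : MvPolynomial ℕ ℂ) ^ (n + 1) + ε := by
  refine ⟨(tridiag (fun k => (X k : MvPolynomial ℕ ℂ)) (2 * (n + 1))).det - (-1)^(n+1),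
    ⟨?_, ?_⟩, by ring⟩
  · exact det_sub_mem (fun k => k < 2 * (n + 1) ∧ Even k) n
      (fun ε hε => myCont_even_vanish (n+1) ε (fun k hk he => hε k ⟨hk, he⟩))
  · exact det_sub_mem (fun k => k < 2 * (n + 1) ∧ Odd k) n
      (fun ε hε => myCont_odd_vanish (n+1) ε (fun k hk ho => hε k ⟨hk, ho⟩))
end

section
/- With the tridiagonal matrices A_{ij}² as above: if j − i is even, then det A_{ij}² = (−1)^{(j−i)/2}(ε_i + ε_{i+2} + ⋯ + ε_j) + ε, where ε belongs to the ideal of ℂ[ε_i,…,ε_j] generated by the products ε_s ε_t with s,t ∈ {i,i+2,…,j}, s ≠ t. -/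
open MvPolynomial

lemma tridiag_val {R : Type*} [CommRing R] (ε : ℕ → R) (n : ℕ) (i j : Fin n) :
    tridiag ε n i j =
      if (i : ℕ) = (j : ℕ) then ε i
      else if (i : ℕ) + 1 = (j : ℕ) ∨ (j : ℕ) + 1 = (i : ℕ) then 1
      else 0 := rfl

lemma tridiag_det_rec {R : Type*} [CommRing R] (ε : ℕ → R) (n : ℕ) :
    (tridiag ε (n + 2)).det
      = ε (n + 1) * (tridiag ε (n + 1)).det - (tridiag ε n).det := by
  have hval : ∀ i : Fin (n+1), (((⟨n, by omega⟩ : Fin (n+2)).succAbove i) : ℕ)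
      = if (i : ℕ) < n then (i : ℕ) else (i : ℕ) + 1 := by
    intro i
    rw [Fin.succAbove]
    split <;> rename_i h <;> simp only [Fin.lt_def, Fin.coe_castSucc] at h <;>
      simp only [Fin.coe_castSucc, Fin.val_succ]
    · rw [if_pos h]
    · rw [if_neg (by omega)]
  rw [Matrix.det_succ_column (tridiag ε (n+2)) (Fin.last (n+1))]
  rw [Finset.sum_eq_add_of_mem (⟨n, by omega⟩ : Fin (n+2)) (Fin.last (n+1))
      (Finset.mem_univ _) (Finset.mem_univ _)
      (by simp [Fin.ext_iff, Fin.last])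
      ?_]
  · -- main computation
    have h1 : tridiag ε (n+2) (Fin.last (n+1)) (Fin.last (n+1)) = ε (n+1) := by
      simp [tridiag_val]
    have h2 : tridiag ε (n+2) ⟨n, by omega⟩ (Fin.last (n+1)) = 1 := by
      rw [tridiag_val]
      rw [if_neg (by simp), if_pos (by simp)]
    have hsubA : (tridiag ε (n+2)).submatrix (Fin.last (n+1)).succAbove
        (Fin.last (n+1)).succAbove = tridiag ε (n+1) := by
      ext i j
      simp [Fin.succAbove_last, tridiag_val]
    have hB : ((tridiag ε (n+2)).submatrix (⟨n, by omega⟩ : Fin (n+2)).succAbove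
        (Fin.last (n+1)).succAbove).det = (tridiag ε n).det := by
      rw [Fin.succAbove_last]
      set B := (tridiag ε (n+2)).submatrix (⟨n, by omega⟩ : Fin (n+2)).succAbove Fin.castSucc
        with hBdef
      rw [Matrix.det_succ_row B (Fin.last n)]
      rw [Finset.sum_eq_single_of_mem (Fin.last n) (Finset.mem_univ _) ?_]
      · have e1 : B (Fin.last n) (Fin.last n) = 1 := by
          rw [hBdef, Matrix.submatrix_apply, tridiag_val]
          rw [if_neg (by simp [hval]), if_pos (by simp [hval])]
        have e2 : B.submatrix (Fin.last n).succAbove (Fin.last n).succAbove = tridiag ε n := by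
          ext i j
          rw [Fin.succAbove_last]
          simp only [hBdef, Matrix.submatrix_apply, tridiag_val]
          have hi := hval i.castSucc
          rw [if_pos (by simp)] at hi
          have hεi : ε ((⟨n, by omega⟩ : Fin (n+2)).succAbove i.castSucc : ℕ) = ε i := by
            rw [hi]; simp
          simp [hi, hεi]
        rw [e1, e2]
        simp [Fin.val_last]
      · intro l _ hl
        have : B (Fin.last n) l = 0 := by
          rw [hBdef, Matrix.submatrix_apply, tridiag_val]
          have h := hval (Fin.last n)
          rw [if_neg (by simp)] at h
          have hlv : (l : ℕ) ≠ n := fun h' => hl (Fin.ext (by simp [h']))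
          have hlb : (l : ℕ) < n + 1 := l.isLt
          rw [if_neg (by rw [h]; simp; omega), if_neg (by rw [h]; simp; omega)]
        rw [this]; ring
    rw [h1, h2, hsubA, hB]
    simp [Fin.val_last]
    ring
  · intro c _ hc
    have hc1 : (c : ℕ) ≠ n := fun h => hc.1 (Fin.ext h)
    have hc2 : (c : ℕ) ≠ n + 1 := fun h => hc.2 (Fin.ext h)
    have : tridiag ε (n+2) c (Fin.last (n+1)) = 0 := by
      simp only [tridiag_val, Fin.val_last]
      rw [if_neg (by omega), if_neg (by omega)]
    rw [this]; ring

open MvPolynomial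

noncomputable def Sn (n : ℕ) : MvPolynomial ℕ ℂ := ∑ k ∈ Finset.range (n + 1), X (2 * k)

def Igen (n : ℕ) : Set (MvPolynomial ℕ ℂ) :=
  {p | ∃ s t : ℕ, s < 2 * n + 1 ∧ t < 2 * n + 1 ∧ Even s ∧ Even t ∧ s ≠ t ∧ p = X s * X t}

def Jgen (n : ℕ) : Set (MvPolynomial ℕ ℂ) :=
  {p | ∃ s t : ℕ, s ≤ 2 * n ∧ t ≤ 2 * n + 1 ∧ Even s ∧ s ≠ t ∧ p = X s * X t}

lemma I_le_J (n : ℕ) : Ideal.span (Igen n) ≤ Ideal.span (Jgen n) :=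
  Ideal.span_mono (by
    rintro p ⟨s, t, hs, ht, hse, _, hst, rfl⟩
    exact ⟨s, t, by omega, by omega, hse, hst, rfl⟩)

lemma I_mono (n : ℕ) : Ideal.span (Igen n) ≤ Ideal.span (Igen (n + 1)) :=
  Ideal.span_mono (by
    rintro p ⟨s, t, hs, ht, hse, hte, hst, rfl⟩
    exact ⟨s, t, by omega, by omega, hse, hte, hst, rfl⟩)

lemma J_mono (n : ℕ) : Ideal.span (Jgen n) ≤ Ideal.span (Jgen (n + 1)) :=
  Ideal.span_mono (by
    rintro p ⟨s, t, hs, ht, hse, hst, rfl⟩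
    exact ⟨s, t, by omega, by omega, hse, hst, rfl⟩)

lemma mulX_J (n : ℕ) {j : MvPolynomial ℕ ℂ} (hj : j ∈ Ideal.span (Jgen n)) :
    X (2 * n + 2) * j ∈ Ideal.span (Igen (n + 1)) := by
  induction hj using Submodule.span_induction with
  | mem p hp =>
      obtain ⟨s, t, hs, ht, hse, hst, rfl⟩ := hp
      have : X (2*n+2) * (X s * X t) = X t * (X s * X (2*n+2) : MvPolynomial ℕ ℂ) := by ring
      rw [this]
      exact Ideal.mul_mem_left _ _ (Ideal.subset_span
        ⟨s, 2*n+2, by omega, by omega, hse, ⟨n+1, by omega⟩, by omega, rfl⟩)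
  | zero => simp
  | add x y hx hy ihx ihy => rw [mul_add]; exact add_mem ihx ihy
  | smul a x hx ihx =>
      rw [smul_eq_mul, mul_left_comm]
      exact Ideal.mul_mem_left _ _ ihx

lemma mulX_I (n : ℕ) {i : MvPolynomial ℕ ℂ} (hi : i ∈ Ideal.span (Igen (n + 1))) :
    X (2 * n + 3) * i ∈ Ideal.span (Jgen (n + 1)) := by
  induction hi using Submodule.span_induction with
  | mem p hp =>
      obtain ⟨s, t, hs, ht, hse, hte, hst, rfl⟩ := hp
      have : X (2*n+3) * (X s * X t) = X t * (X s * X (2*n+3) : MvPolynomial ℕ ℂ) := by ring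
      rw [this]
      exact Ideal.mul_mem_left _ _ (Ideal.subset_span
        ⟨s, 2*n+3, by omega, by omega, hse, by omega, rfl⟩)
  | zero => simp
  | add x y hx hy ihx ihy => rw [mul_add]; exact add_mem ihx ihy
  | smul a x hx ihx =>
      rw [smul_eq_mul, mul_left_comm]
      exact Ideal.mul_mem_left _ _ ihx

lemma XS_J (n : ℕ) : X (2 * n + 3) * Sn (n + 1) ∈ Ideal.span (Jgen (n + 1)) := by
  rw [Sn, Finset.mul_sum]
  refine sum_mem fun k hk => ?_
  have hk' : k ≤ n + 1 := by
    have := Finset.mem_range.1 hk; omega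
  have : X (2*n+3) * (X (2*k) : MvPolynomial ℕ ℂ) = X (2*k) * X (2*n+3) := mul_comm _ _
  rw [this]
  exact Ideal.subset_span ⟨2*k, 2*n+3, by omega, by omega, ⟨k, by omega⟩, by omega, rfl⟩

noncomputable def Xp : ℕ → MvPolynomial ℕ ℂ := fun k => X k

lemma key (n : ℕ) :
    (tridiag Xp (2 * n + 1)).det - (-1) ^ n * Sn n ∈ Ideal.span (Igen n) ∧
    (tridiag Xp (2 * n + 2)).det - (-1) ^ (n + 1) ∈ Ideal.span (Jgen n) := by
  induction n with
  | zero =>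
      constructor
      · have h1 : (tridiag Xp 1).det = X 0 := by
          rw [Matrix.det_fin_one]; simp [tridiag_val, Xp]
        rw [h1]
        simp [Sn]
      · have h2 : (tridiag Xp 2).det = X 0 * X 1 - 1 := by
          rw [Matrix.det_fin_two]
          simp [tridiag_val, Xp]
        rw [h2]
        have : (X 0 * X 1 - 1 : MvPolynomial ℕ ℂ) - (-1)^(0+1) = X 0 * X 1 := by ring
        rw [this]
        exact Ideal.subset_span ⟨0, 1, by omega, by omega, Even.zero, by omega, rfl⟩
  | succ n ih =>
      obtain ⟨hA, hB⟩ := ih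
      have recA : (tridiag Xp (2 * n + 1 + 2)).det
          = Xp (2 * n + 2) * (tridiag Xp (2 * n + 2)).det - (tridiag Xp (2 * n + 1)).det :=
        tridiag_det_rec Xp (2 * n + 1)
      have recB : (tridiag Xp (2 * n + 2 + 2)).det
          = Xp (2 * n + 3) * (tridiag Xp (2 * n + 3)).det - (tridiag Xp (2 * n + 2)).det :=
        tridiag_det_rec Xp (2 * n + 2)
      have hA' : (tridiag Xp (2 * (n + 1) + 1)).det - (-1) ^ (n + 1) * Sn (n + 1)
          ∈ Ideal.span (Igen (n + 1)) := by
        have hsz : 2 * (n + 1) + 1 = 2 * n + 1 + 2 := by ring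
        rw [hsz]
        have expand : (tridiag Xp (2 * n + 1 + 2)).det - (-1) ^ (n + 1) * Sn (n + 1)
            = X (2 * n + 2) * ((tridiag Xp (2 * n + 2)).det - (-1) ^ (n + 1))
              - ((tridiag Xp (2 * n + 1)).det - (-1) ^ n * Sn n) := by
          rw [recA, Sn, Finset.sum_range_succ, ← Sn, pow_succ]
          simp only [Xp]
          ring
        rw [expand]
        exact sub_mem (mulX_J n hB) (I_mono n hA)
      refine ⟨hA', ?_⟩
      have hsz2 : 2 * (n + 1) + 2 = 2 * n + 2 + 2 := by ring
      have hsz3 : 2 * (n + 1) + 1 = 2 * n + 3 := by ring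
      rw [hsz2]
      have hA3 : (tridiag Xp (2 * n + 3)).det - (-1) ^ (n + 1) * Sn (n + 1)
          ∈ Ideal.span (Igen (n + 1)) := by rw [← hsz3]; exact hA'
      have expand2 : (tridiag Xp (2 * n + 2 + 2)).det - (-1) ^ (n + 1 + 1)
          = (-1) ^ (n + 1) * (X (2 * n + 3) * Sn (n + 1))
            + X (2 * n + 3) * ((tridiag Xp (2 * n + 3)).det - (-1) ^ (n + 1) * Sn (n + 1))
            - ((tridiag Xp (2 * n + 2)).det - (-1) ^ (n + 1)) := by
        rw [recB]
        simp only [Xp]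
        rw [pow_succ ((-1 : MvPolynomial ℕ ℂ)) (n+1)]
        ring
      rw [expand2]
      exact sub_mem (add_mem (Ideal.mul_mem_left _ _ (XS_J n)) (mulX_I n hA3)) (J_mono n hB)

/-- When `j − i` is even, i.e. the size `m = j − i + 1` is odd (here `m = 2n + 1`), the
determinant of the tridiagonal matrix `A_{ij}²` over `ℂ[ε_i,…,ε_j]` equals
`(−1)^{(j−i)/2} (ε_i + ε_{i+2} + ⋯ + ε_j)` plus an element of the ideal generated by the
products `ε_s ε_t` with `s ≠ t`, `s, t ∈ {i, i+2, …, j}` (in zero-based indexing these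
are the even-indexed variables). -/
theorem stmt7 (n : ℕ) :
    ∃ ε ∈ Ideal.span {p : MvPolynomial ℕ ℂ | ∃ s t : ℕ,
        s < 2 * n + 1 ∧ t < 2 * n + 1 ∧ Even s ∧ Even t ∧ s ≠ t ∧ p = X s * X t},
      (tridiag (fun k => (X k : MvPolynomial ℕ ℂ)) (2 * n + 1)).det =
        (-1 : MvPolynomial ℕ ℂ) ^ n *
          (∑ k ∈ Finset.range (n + 1), X (2 * k)) + ε := by
  refine ⟨(tridiag Xp (2 * n + 1)).det - (-1) ^ n * Sn n, (key n).1, ?_⟩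
  have hS : Sn n = ∑ k ∈ Finset.range (n + 1), (X (2 * k) : MvPolynomial ℕ ℂ) := rfl
  have hX : (fun k => (X k : MvPolynomial ℕ ℂ)) = Xp := rfl
  rw [hX, hS]
  ring
end

section
/- Consider the tridiagonal matrix A of size m×m with diagonal entries ε₁,…,ε_m (elements of a commutative ring) and all sub- and super-diagonal entries equal to 1, where m is even. If ε₁ = ε₃ = ⋯ = ε_{m−1} = 0 (all odd-indexed diagonal entries vanish), then det A = (−1)^{m/2}. -/
lemma val_succAbove {n : ℕ} (p : Fin (n+1)) (i : Fin n) :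
    ((p.succAbove i : Fin (n+1)) : ℕ) = if (i : ℕ) < (p : ℕ) then (i : ℕ) else (i : ℕ) + 1 := by
  rcases lt_or_ge (i : ℕ) (p : ℕ) with h | h
  · rw [Fin.succAbove_of_castSucc_lt _ _ (by simpa [Fin.lt_def] using h), if_pos h]
    simp
  · rw [Fin.succAbove_of_le_castSucc _ _ (by simpa [Fin.le_def] using h), if_neg (by omega)]
    simp

open Matrix Finset in
lemma tridiag_rec {R : Type*} [CommRing R] (ε : ℕ → R) (n : ℕ) :
    (tridiag ε (n+2)).det = ε (n+1) * (tridiag ε (n+1)).det - (tridiag ε n).det := by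
  rw [det_succ_row (tridiag ε (n+2)) (Fin.last (n+1))]
  rw [Fin.sum_univ_castSucc, Fin.sum_univ_castSucc]
  have h0 : ∀ j : Fin n, (tridiag ε (n+2)) (Fin.last (n+1)) (Fin.castSucc (Fin.castSucc j)) = 0 := by
    intro j
    have hj := j.isLt
    simp only [tridiag, Fin.val_last, Fin.coe_castSucc]
    split_ifs <;> first | rfl | (exfalso; omega) | (exfalso; tauto)
  have hsum : ∀ j : Fin n,
      (-1:R) ^ ((Fin.last (n+1) : ℕ) + ((Fin.castSucc (Fin.castSucc j)) : ℕ)) *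
        (tridiag ε (n+2)) (Fin.last (n+1)) (Fin.castSucc (Fin.castSucc j)) *
        ((tridiag ε (n+2)).submatrix (Fin.last (n+1)).succAbove
          (Fin.castSucc (Fin.castSucc j)).succAbove).det = 0 := by
    intro j; rw [h0]; ring
  rw [Finset.sum_congr rfl (fun j _ => hsum j), Finset.sum_const, smul_zero, zero_add]
  have hdiag : (tridiag ε (n+2)) (Fin.last (n+1)) (Fin.last (n+1)) = ε (n+1) := by
    simp [tridiag]
  have hoff : (tridiag ε (n+2)) (Fin.last (n+1)) (Fin.castSucc (Fin.last n)) = 1 := by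
    simp only [tridiag, Fin.val_last, Fin.coe_castSucc]
    split_ifs <;> first | rfl | (exfalso; omega) | (exfalso; tauto)
  have hsub1 : (tridiag ε (n+2)).submatrix (Fin.last (n+1)).succAbove
      (Fin.last (n+1)).succAbove = tridiag ε (n+1) := by
    ext i j
    simp [tridiag, Matrix.submatrix_apply, Fin.succAbove_last]
  set B := (tridiag ε (n+2)).submatrix (Fin.last (n+1)).succAbove
      (Fin.castSucc (Fin.last n)).succAbove with hB
  have hval1 : (((Fin.castSucc (Fin.last n)).succAbove (Fin.last n) : Fin (n+2)) : ℕ) = n + 1 := by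
    rw [val_succAbove]; simp
  have hval2 : ∀ j : Fin n,
      (((Fin.castSucc (Fin.last n)).succAbove (Fin.castSucc j) : Fin (n+2)) : ℕ) = (j : ℕ) := by
    intro j
    rw [val_succAbove]
    simp [j.isLt]
  have hBdet : B.det = (tridiag ε n).det := by
    rw [det_succ_column B (Fin.last n)]
    have hcol : ∀ i : Fin (n+1), B i (Fin.last n) = if (i : ℕ) = n then 1 else 0 := by
      intro i
      have hi := i.isLt
      simp only [hB, Matrix.submatrix_apply, Fin.succAbove_last, tridiag, Fin.coe_castSucc, hval1]
      split_ifs <;> first | rfl | (exfalso; omega) | (exfalso; tauto)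
    have hterm : ∀ i : Fin (n+1), i ≠ Fin.last n →
        (-1:R) ^ ((i : ℕ) + ((Fin.last n : ℕ))) * B i (Fin.last n) *
          (B.submatrix i.succAbove (Fin.last n).succAbove).det = 0 := by
      intro i hi
      have : (i : ℕ) ≠ n := fun hc => hi (Fin.ext (by simpa using hc))
      rw [hcol, if_neg this]; ring
    rw [Finset.sum_eq_single (Fin.last n) (fun i _ hi => hterm i hi) (by simp)]
    rw [hcol, if_pos (by simp)]
    have hsub2 : B.submatrix (Fin.last n).succAbove (Fin.last n).succAbove = tridiag ε n := by
      ext i j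
      simp only [hB, Matrix.submatrix_apply, Fin.succAbove_last, tridiag, Fin.coe_castSucc, hval2]
    rw [hsub2]
    have hsgn : (-1:R) ^ ((Fin.last n : ℕ) + (Fin.last n : ℕ)) = 1 := by
      simp [Fin.val_last, ← two_mul, pow_mul]
    rw [hsgn]; ring
  rw [hdiag, hoff, hsub1, hBdet]
  have h1 : (-1:R) ^ ((Fin.last (n+1) : ℕ) + ((Fin.castSucc (Fin.last n)) : ℕ)) = -1 := by
    simp only [Fin.val_last, Fin.coe_castSucc]
    rw [show n + 1 + n = 2 * n + 1 by ring, pow_succ, pow_mul]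
    simp
  have h2 : (-1:R) ^ ((Fin.last (n+1) : ℕ) + ((Fin.last (n+1)) : ℕ)) = 1 := by
    simp [Fin.val_last, ← two_mul, pow_mul]
  rw [h1, h2]; ring

lemma tridiag_even_odd {R : Type*} [CommRing R] (ε : ℕ → R) :
    ∀ n : ℕ,
      ((∀ k, k < 2 * n → Even k → ε k = 0) → (tridiag ε (2 * n)).det = (-1 : R) ^ n) ∧
      ((∀ k, k < 2 * n + 1 → Even k → ε k = 0) → (tridiag ε (2 * n + 1)).det = 0) := by
  intro n
  induction n with
  | zero =>
    constructor
    · intro _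
      simp [Matrix.det_fin_zero, show 2 * 0 = 0 from rfl]
    · intro h
      have : (tridiag ε 1).det = ε 0 := by
        simp [tridiag, Matrix.det_fin_one]
      rw [this, h 0 (by omega) Even.zero]
  | succ n ih =>
    constructor
    · intro h
      have h2 : (tridiag ε (2 * (n + 1))).det
          = ε (2 * n + 1) * (tridiag ε (2 * n + 1)).det - (tridiag ε (2 * n)).det := by
        have := tridiag_rec ε (2 * n)
        rwa [show 2 * n + 2 = 2 * (n + 1) by ring] at this
      rw [h2, ih.2 (fun k hk he => h k (by omega) he),
        ih.1 (fun k hk he => h k (by omega) he)]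
      ring
    · intro h
      have h2 : (tridiag ε (2 * (n + 1) + 1)).det
          = ε (2 * (n + 1)) * (tridiag ε (2 * (n + 1))).det - (tridiag ε (2 * n + 1)).det := by
        have := tridiag_rec ε (2 * n + 1)
        rwa [show 2 * n + 1 + 2 = 2 * (n + 1) + 1 by ring,
          show 2 * n + 1 + 1 = 2 * (n + 1) by ring] at this
      rw [h2, h (2 * (n + 1)) (by omega) (even_two_mul _),
        ih.2 (fun k hk he => h k (by omega) he)]
      ring

/-- For the tridiagonal matrix of even size `m = 2(n+1)` with diagonal `ε₁,…,ε_m`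
(one-based; zero-based `ε 0, …, ε (m-1)`) and off-diagonal entries `1`: if all the
odd-indexed (one-based) diagonal entries `ε₁ = ε₃ = ⋯ = ε_{m−1} = 0` vanish — i.e. the
even-indexed entries in zero-based indexing — then `det = (−1)^{m/2}`. -/
theorem stmt8 {R : Type*} [CommRing R] (n : ℕ) (ε : ℕ → R)
    (h : ∀ k, k < 2 * (n + 1) → Even k → ε k = 0) :
    (tridiag ε (2 * (n + 1))).det = (-1 : R) ^ (n + 1) := by
  exact (tridiag_even_odd ε (n + 1)).1 h
end

section
/- With the matrices Fᵢ and vectors v_{ij} of the previous context, and writing |F| for the composition of F with taking componentwise absolute values: for any 1 ≤ i ≤ j ≤ n, the composite |F_{i−1}| ∘ |F_{i−2}| ∘ ⋯ ∘ |F₁| ∘ |F_j| ∘ |F_{j−1}| ∘ ⋯ ∘ |F₂| applied to v_{ij} equals v_{11} (with the convention that for i = j = 1 the empty composite is the identity, and for i = 1 only the maps |F_j|,…,|F₂| are applied). -/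
/-- The flop transformation matrix `Fᵢ ∈ M_n(ℤ)` (one-based indices):
`F₁ = I − 2E₁₁ + E₁₂`, `F_n = I − 2E_{nn} + E_{n,n−1}`, and
`Fᵢ = I − 2E_{ii} + E_{i,i−1} + E_{i,i+1}` for `1 < i < n`. -/
def Fmat (n i : ℕ) : Matrix (Fin n) (Fin n) ℤ :=
  fun s t =>
    if (s : ℕ) + 1 = i then
      if (t : ℕ) + 1 = i then -1
      else if (t : ℕ) + 2 = i ∨ (t : ℕ) = i then 1
      else 0
    else if s = t then 1 else 0

/-- The vector `v_{ij} = Σ_{k=i}^{j} e_k ∈ ℤⁿ` (one-based indices). -/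
def vvec (n i j : ℕ) : Fin n → ℤ :=
  fun k => if i ≤ (k : ℕ) + 1 ∧ (k : ℕ) + 1 ≤ j then 1 else 0

/-- `|Fₐ|(w)`: apply `Fₐ` and then take componentwise absolute values. -/
def absF (n a : ℕ) (w : Fin n → ℤ) : Fin n → ℤ :=
  fun k => |((Fmat n a).mulVec w) k|

lemma mulVec_Fmat (n a : ℕ) (w : Fin n → ℤ) (k : Fin n) :
    (Fmat n a).mulVec w k =
      if (k : ℕ) + 1 = a then
        (∑ t : Fin n, if (t : ℕ) + 2 = a ∨ (t : ℕ) = a then w t else 0) - w k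
      else w k := by
  simp only [Matrix.mulVec, dotProduct, Fmat]
  split_ifs with h
  · have hterm : ∀ t : Fin n,
        (if (t : ℕ) + 1 = a then (-1 : ℤ)
          else if (t : ℕ) + 2 = a ∨ (t : ℕ) = a then 1 else 0) * w t
        = (if (t : ℕ) + 2 = a ∨ (t : ℕ) = a then w t else 0)
          - (if (t : ℕ) + 1 = a then w t else 0) := by
      intro t
      by_cases h1 : (t : ℕ) + 1 = a
      · have hno : ¬((t : ℕ) + 2 = a ∨ (t : ℕ) = a) := by omega
        simp [h1, hno]
      · simp only [h1, if_false]
        split_ifs <;> ring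
    rw [Finset.sum_congr rfl (fun t _ => hterm t), Finset.sum_sub_distrib]
    have h2 : ∀ t : Fin n, ((t : ℕ) + 1 = a) = (t = k) := by
      intro t
      simp only [eq_iff_iff, Fin.ext_iff]
      omega
    simp only [h2, Finset.sum_ite_eq', Finset.mem_univ, if_pos]
  · have h2 : ∀ t : Fin n, (k = t) = (t = k) := by
      intro t; simp [eq_comm]
    simp only [h2, ite_mul, one_mul, zero_mul, Finset.sum_ite_eq',
      Finset.mem_univ, if_pos]

lemma lemA (n a j : ℕ) (ha : 1 ≤ a) (haj : a + 1 ≤ j) (hj : j ≤ n) :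
    absF n a (vvec n (a + 1) j) = vvec n a j := by
  funext k
  simp only [absF, mulVec_Fmat]
  by_cases hk : (k : ℕ) + 1 = a
  · rw [if_pos hk]
    have hsum : (∑ t : Fin n,
        if (t : ℕ) + 2 = a ∨ (t : ℕ) = a then vvec n (a + 1) j t else 0) = 1 := by
      simp only [vvec]
      rw [Fin.sum_univ_eq_sum_range (fun c =>
        if c + 2 = a ∨ c = a then (if a + 1 ≤ c + 1 ∧ c + 1 ≤ j then (1:ℤ) else 0) else 0)]
      rw [Finset.sum_congr rfl (fun c hc => ?_), Finset.sum_ite_eq' (Finset.range n) a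
        (fun _ => (1:ℤ))]
      · rw [if_pos (by rw [Finset.mem_range]; omega)]
      · rw [Finset.mem_range] at hc
        split_ifs <;> omega
    rw [hsum]
    have hwk : vvec n (a + 1) j k = 0 := by
      simp only [vvec]; rw [if_neg (by omega)]
    rw [hwk]
    simp only [vvec]
    rw [if_pos (by omega)]
    norm_num
  · rw [if_neg hk]
    simp only [vvec]
    split_ifs <;> first | (exfalso; omega) | norm_num

lemma lemB (n m : ℕ) (hm : m + 2 ≤ n) :
    absF n (m + 2) (vvec n 1 (m + 2)) = vvec n 1 (m + 1) := by
  funext k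
  simp only [absF, mulVec_Fmat]
  by_cases hk : (k : ℕ) + 1 = m + 2
  · rw [if_pos hk]
    have hsum : (∑ t : Fin n,
        if (t : ℕ) + 2 = m + 2 ∨ (t : ℕ) = m + 2 then vvec n 1 (m + 2) t else 0) = 1 := by
      simp only [vvec]
      rw [Fin.sum_univ_eq_sum_range (fun c =>
        if c + 2 = m + 2 ∨ c = m + 2 then (if 1 ≤ c + 1 ∧ c + 1 ≤ m + 2 then (1:ℤ) else 0) else 0)]
      rw [Finset.sum_congr rfl (fun c hc => ?_), Finset.sum_ite_eq' (Finset.range n) m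
        (fun _ => (1:ℤ))]
      · rw [if_pos (by rw [Finset.mem_range]; omega)]
      · rw [Finset.mem_range] at hc
        split_ifs <;> omega
    rw [hsum]
    have hwk : vvec n 1 (m + 2) k = 1 := by
      simp only [vvec]; rw [if_pos (by omega)]
    rw [hwk]
    simp only [vvec]
    rw [if_neg (by omega)]
    norm_num
  · rw [if_neg hk]
    simp only [vvec]
    split_ifs <;> first | (exfalso; omega) | norm_num

lemma foldA (n j : ℕ) (hj : j ≤ n) :
    ∀ k, k + 1 ≤ j →
      List.foldl (fun w a => absF n a w) (vvec n (k + 1) j)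
        ((List.range k).reverse.map (· + 1)) = vvec n 1 j := by
  intro k
  induction k with
  | zero => intro _; simp
  | succ k ih =>
    intro hk
    rw [List.range_succ, List.reverse_append]
    simp only [List.reverse_singleton, List.reverse_nil, List.map_append, List.map_cons,
      List.singleton_append, List.map_nil, List.foldl_cons]
    rw [show k + 1 + 1 = k + 2 from rfl, lemA n (k + 1) j (by omega) (by omega) hj]
    exact ih (by omega)

lemma foldB (n : ℕ) :
    ∀ m, m + 1 ≤ n →
      List.foldl (fun w a => absF n a w) (vvec n 1 (m + 1))
        ((List.range m).reverse.map (· + 2)) = vvec n 1 1 := by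
  intro m
  induction m with
  | zero => intro _; simp
  | succ m ih =>
    intro hm
    rw [List.range_succ, List.reverse_append]
    simp only [List.reverse_singleton, List.reverse_nil, List.map_append, List.map_cons,
      List.singleton_append, List.map_nil, List.foldl_cons]
    rw [show m + 1 + 1 = m + 2 from rfl, lemB n m (by omega)]
    exact ih (by omega)


/-- For `1 ≤ i ≤ j ≤ n`, applying successively `|F_{i−1}|, |F_{i−2}|, …, |F₁|`, and then
`|F_j|, |F_{j−1}|, …, |F₂|`, to `v_{ij}` yields `v_{11}`.  (For `i = j = 1` the empty
composite is the identity, and for `i = 1` only the maps `|F_j|, …, |F₂|` are applied.) -/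
theorem stmt10 (n i j : ℕ) (hi : 1 ≤ i) (hij : i ≤ j) (hj : j ≤ n) :
    List.foldl (fun w a => absF n a w) (vvec n i j)
        (((List.range (i - 1)).reverse.map (· + 1)) ++
          ((List.range (j - 1)).reverse.map (· + 2))) = vvec n 1 1 := by
  obtain ⟨k, rfl⟩ : ∃ k, i = k + 1 := ⟨i - 1, by omega⟩
  obtain ⟨m, rfl⟩ : ∃ m, j = m + 1 := ⟨j - 1, by omega⟩
  rw [List.foldl_append]
  rw [show k + 1 - 1 = k from rfl, show m + 1 - 1 = m from rfl]
  rw [foldA n (m + 1) hj k (by omega)]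
  exact foldB n m hj
end

section
/- In ℂ[[x,y]], with f₀ = x, f₁ = y, f₂ = x + yⁿ for n ≥ 1: dim_ℂ ℂ[[x,y]]/(f₀,f₁) = 1, dim_ℂ ℂ[[x,y]]/(f₁,f₂) = 1, and dim_ℂ ℂ[[x,y]]/(f₀,f₂) = n. -/
set_option synthInstance.maxHeartbeats 400000

open MvPowerSeries

/-!
Modulo `x`, a power series in `x, y` is determined by its coefficients on the `y`-axis, so
`R⟦x,y⟧ ⧸ (x, yⁿ) ≅ Rⁿ` via the first `n` of those coefficients. The three ideals of the theorem
are `(x, y¹)`, `(y, x + y · yⁿ⁻¹) = (y, x)` and `(x, x + yⁿ) = (x, yⁿ)`.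
-/

namespace MvPowerSeries

variable (R : Type*) [CommRing R]

noncomputable def coeffYAxis (n : ℕ) : MvPowerSeries (Fin 2) R →ₗ[R] (Fin n → R) :=
  LinearMap.pi fun k => coeff (Finsupp.single 1 (k : ℕ))

variable {R}

lemma eq_single_one_of_apply_zero_eq_zero {m : Fin 2 →₀ ℕ} (h : m 0 = 0) :
    m = Finsupp.single 1 (m 1) := by
  ext i
  fin_cases i <;> simp [h]

lemma coeffYAxis_apply (n : ℕ) (f : MvPowerSeries (Fin 2) R) (k : Fin n) :
    coeffYAxis R n f k = coeff (Finsupp.single 1 (k : ℕ)) f := rfl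

lemma exists_X_zero_dvd_sub_supported_on_yAxis (f : MvPowerSeries (Fin 2) R) :
    ∃ h : MvPowerSeries (Fin 2) R, X 0 ∣ f - h ∧
      ∀ m : Fin 2 →₀ ℕ, coeff m h = if m 0 = 0 then coeff m f else 0 := by
  refine ⟨fun m => if m 0 = 0 then coeff m f else 0, X_dvd_iff.2 fun m hm => ?_, fun m => rfl⟩
  change coeff m f - (if m 0 = 0 then coeff m f else 0) = 0
  simp [hm]

lemma ker_coeffYAxis (n : ℕ) :
    LinearMap.ker (coeffYAxis R n) =
      (Ideal.span {(X 0 : MvPowerSeries (Fin 2) R), X 1 ^ n}).restrictScalars R := by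
  ext f
  simp only [LinearMap.mem_ker, Submodule.restrictScalars_mem, Ideal.mem_span_pair]
  constructor
  · intro hf
    obtain ⟨h, ⟨g, hg⟩, hh⟩ := exists_X_zero_dvd_sub_supported_on_yAxis f
    have hyn : X 1 ^ n ∣ h := X_pow_dvd_iff.2 fun m hm => by
      rw [hh]
      split_ifs with h0
      · rw [eq_single_one_of_apply_zero_eq_zero h0]
        exact congrFun hf ⟨m 1, hm⟩
      · rfl
    obtain ⟨g', hg'⟩ := hyn
    exact ⟨g, g', by rw [mul_comm g, mul_comm g', ← hg, ← hg']; ring⟩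
  · rintro ⟨a, b, rfl⟩
    funext k
    have ha : coeff (Finsupp.single 1 (k : ℕ)) (a * X 0) = 0 :=
      X_dvd_iff.1 (dvd_mul_left _ a) _ (by simp)
    have hb : coeff (Finsupp.single 1 (k : ℕ)) (b * X 1 ^ n) = 0 :=
      X_pow_dvd_iff.1 (dvd_mul_left _ b) _ (by simp)
    simp [coeffYAxis_apply, ha, hb]

lemma coeffYAxis_surjective (n : ℕ) : Function.Surjective (coeffYAxis R n) := by
  intro v
  refine ⟨∑ k : Fin n, C (v k) * X 1 ^ (k : ℕ), funext fun j => ?_⟩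
  rw [coeffYAxis_apply, map_sum, Finset.sum_eq_single j]
  · simp [coeff_C_mul, coeff_X_pow]
  · intro k _ hkj
    have : Finsupp.single (1 : Fin 2) (j : ℕ) ≠ Finsupp.single 1 (k : ℕ) := fun heq =>
      hkj (Fin.val_injective (Finsupp.single_injective 1 heq)).symm
    simp [coeff_C_mul, coeff_X_pow, this]
  · simp

noncomputable def quotSpanXZeroXOnePowEquiv (n : ℕ) :
    (MvPowerSeries (Fin 2) R ⧸ Ideal.span {(X 0 : MvPowerSeries (Fin 2) R), X 1 ^ n})
      ≃ₗ[R] (Fin n → R) :=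
  ((Submodule.Quotient.restrictScalarsEquiv R _).symm.trans
    (Submodule.quotEquivOfEq _ _ (ker_coeffYAxis n).symm)).trans
    ((coeffYAxis R n).quotKerEquivOfSurjective (coeffYAxis_surjective n))

lemma rank_quotient_span_X_zero_X_one_pow {K : Type*} [Field K] (n : ℕ) :
    Module.rank K
      (MvPowerSeries (Fin 2) K ⧸ Ideal.span {(X 0 : MvPowerSeries (Fin 2) K), X 1 ^ n}) = n := by
  rw [(quotSpanXZeroXOnePowEquiv n).rank_eq, rank_fun', Fintype.card_fin]

end MvPowerSeries

lemma dimCXY_span_X_zero_X_one_pow (n : ℕ) :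
    dimCXY (Ideal.span {(X 0 : CXY), X 1 ^ n}) = n := by
  rw [dimCXY, rank_quotient_span_X_zero_X_one_pow, Cardinal.toENat_nat]

/-- With `f₀ = x`, `f₁ = y`, `f₂ = x + yⁿ` (`n ≥ 1`) in `ℂ[[x,y]]`:
`dim ℂ[[x,y]]/(f₀,f₁) = 1`, `dim ℂ[[x,y]]/(f₁,f₂) = 1`, `dim ℂ[[x,y]]/(f₀,f₂) = n`. -/
theorem stmt15 (n : ℕ) (hn : 1 ≤ n) :
    dimCXY (Ideal.span {(X 0 : CXY), X 1}) = 1 ∧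
    dimCXY (Ideal.span {(X 1 : CXY), X 0 + X 1 ^ n}) = 1 ∧
    dimCXY (Ideal.span {(X 0 : CXY), X 0 + X 1 ^ n}) = (n : ℕ∞) := by
  have hxy : dimCXY (Ideal.span {(X 0 : CXY), X 1}) = 1 := by
    simpa using dimCXY_span_X_zero_X_one_pow 1
  have hyx : Ideal.span {(X 1 : CXY), X 0 + X 1 ^ n} = Ideal.span {X 0, X 1} := by
    obtain ⟨k, rfl⟩ := Nat.exists_eq_add_of_le' hn
    rw [pow_succ', Ideal.span_pair_add_left_mul, Ideal.span_pair_comm]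
  have hxyn : Ideal.span {(X 0 : CXY), X 0 + X 1 ^ n} = Ideal.span {X 0, X 1 ^ n} := by
    rw [← Ideal.span_pair_add_left_mul (X 0) (X 1 ^ n) 1, mul_one, add_comm]
  exact ⟨hxy, hyx ▸ hxy, hxyn ▸ dimCXY_span_X_zero_X_one_pow n⟩
end
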